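/- arXiv:2305.08132 — 3 statements merged into one kernel-verified Lean document; each statement's English description precedes it below -/
import Mathlib

section
/- The noncommutative Cauchy product Ω(x,u) = H(x_1,u)·H(x_2,u)···, where H(x,u) = Σ_{ℓ≥0} x^ℓ h_ℓ(u), equals Σ_w F_{d, Des(w)}(x) · u_w, the sum over all words w on {1,...,N}, where d is the length of w, Des(w) = {i : w_i > w_{i+1}} is the descent set, and F_{d,S}(x) is the fundamental quasisymmetric function. -/
open scoped Classical

/-- The noncommutative elementary symmetric function
`e_k(u) = Σ_{i_1 > ⋯ > i_k} u_{i_1} ⋯ u_{i_k}` in the free associative algebra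
`U = ℚ⟨u_1, …, u_N⟩`. -/
noncomputable def eU (N k : ℕ) : FreeAlgebra ℚ (Fin N) :=
  ∑ w ∈ Finset.univ.filter (fun w : Fin k → Fin N => ∀ i j : Fin k, i < j → w j < w i),
    (List.ofFn fun i => FreeAlgebra.ι ℚ (w i)).prod

/-- The sum `Σ_{i_1 ≤ ⋯ ≤ i_k} u_{i_1} ⋯ u_{i_k}` over weakly increasing words. -/
noncomputable def hUmono (N k : ℕ) : FreeAlgebra ℚ (Fin N) :=
  ∑ w ∈ Finset.univ.filter (fun w : Fin k → Fin N => ∀ i j : Fin k, i ≤ j → w i ≤ w j),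
    (List.ofFn fun i => FreeAlgebra.ι ℚ (w i)).prod

/-- The noncommutative complete homogeneous symmetric function, defined
inductively by `h_k(u) = e_1(u) h_{k-1}(u) - e_2(u) h_{k-2}(u) + ⋯ + (-1)^{k-1} e_k(u)`,
with `h_0(u) = 1`. -/
noncomputable def hU (N : ℕ) : ℕ → FreeAlgebra ℚ (Fin N)
  | 0 => 1
  | (k + 1) =>
      ∑ i ∈ Finset.range (k + 1), ((-1 : ℚ) ^ i) • (eU N (i + 1) * hU N (k - i))
  termination_by k => k
  decreasing_by omega

/-- Degree of a monomial. -/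
noncomputable def degd (d : ℕ →₀ ℕ) : ℕ := d.sum fun _ n => n

/-- The noncommutative Cauchy product `Ω(x,u) = H(x_1,u) H(x_2,u) ⋯`, where
`H(x,u) = Σ_ℓ x^ℓ h_ℓ(u)`: the coefficient of a monomial `Π_i x_i^{d_i}` is the
ordered product `Π_i h_{d_i}(u)` (over the variables occurring, in increasing
order; the omitted factors are `h_0(u) = 1`). -/
noncomputable def Omega (N : ℕ) : MvPowerSeries ℕ (FreeAlgebra ℚ (Fin N)) :=
  fun d => ((d.support.sort (· ≤ ·)).map fun i => hU N (d i)).prod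

/-- The fundamental quasisymmetric function `F_{n,S}`: the sum of monomials
`x_{a_1} ⋯ x_{a_n}` over weakly increasing sequences `a` which increase strictly
at each position of `S`. -/
noncomputable def fundQS (n : ℕ) (S : Finset (Fin n)) : MvPowerSeries ℕ ℚ :=
  fun d => (Nat.card {a : Fin n → ℕ //
    (∀ i j : Fin n, i ≤ j → a i ≤ a j) ∧
    (∀ i : Fin n, ∀ h : (i : ℕ) + 1 < n, i ∈ S → a i < a ⟨(i : ℕ) + 1, h⟩) ∧
    (∀ j : ℕ, Nat.card {i : Fin n // a i = j} = d j)} : ℚ)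

/-- The descent set of a word `w`. -/
noncomputable def DesW {N n : ℕ} (w : Fin n → Fin N) : Finset (Fin n) :=
  Finset.univ.filter fun i : Fin n =>
    ∃ h : (i : ℕ) + 1 < n, w ⟨(i : ℕ) + 1, h⟩ < w i

/-- The monomial `u_w = u_{w_1} ⋯ u_{w_n}` of a word. -/
noncomputable def uword {N n : ℕ} (w : Fin n → Fin N) : FreeAlgebra ℚ (Fin N) :=
  (List.ofFn fun i => FreeAlgebra.ι ℚ (w i)).prod

/-!
The recursion defining `hU` is the coefficientwise form of `E(-t) H(t) = 1`, where `E` and `H`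
are the generating series of strictly decreasing and of weakly increasing words. For the series
`E_n`, `H_n` of words in the letters `u_0, …, u_{n-1}` this follows by induction on `n`: the letter
`u_n` multiplies `E_n(-t)` by `1 - u_n t` on the left and `H_n(t)` by `(1 - u_n t)⁻¹` on the right.
Hence `h_ℓ(u)` is the sum of `u_w` over weakly increasing words of length `ℓ`, and the coefficient
of `x^d` in `Ω` is the sum of `u_w` over the words that are weakly increasing on consecutive blocks
of lengths `d_{i_1}, d_{i_2}, …`, where `i_1 < i_2 < ⋯` is the support of `d`.
On the other side, the only weakly increasing sequence with content `d` is the block sequence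
`i_1^{d_{i_1}} i_2^{d_{i_2}} ⋯`, so the coefficient of `x^d` in `F_{n, Des w}` is `1` if this
sequence ascends at every descent of `w` (the same block condition) and `0` otherwise.
-/

open Finset

theorem Fin.strictAnti_cons {α : Type*} [Preorder α] {k : ℕ} (a : α) (f : Fin k → α) :
    StrictAnti (Fin.cons a f : Fin (k + 1) → α) ↔ (∀ j, f j < a) ∧ StrictAnti f :=
  Fin.liftFun_cons (· > ·)

theorem Fin.monotone_snoc {α : Type*} [Preorder α] {k : ℕ} (f : Fin k → α) (a : α) :
    Monotone (Fin.snoc f a : Fin (k + 1) → α) ↔ (∀ j, f j ≤ a) ∧ Monotone f := by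
  refine ⟨fun h => ⟨fun j => ?_, fun i j hij => ?_⟩, fun ⟨hfa, hf⟩ i j hij => ?_⟩
  · simpa using h (Fin.le_last (Fin.castSucc j))
  · simpa using h (Fin.castSucc_le_castSucc_iff.mpr hij)
  · induction j using Fin.lastCases with
    | last => induction i using Fin.lastCases <;> simp [hfa]
    | cast j =>
      induction i using Fin.lastCases with
      | last => exact absurd hij (not_le.mpr (Fin.castSucc_lt_last j))
      | cast i => simpa using hf (Fin.castSucc_le_castSucc_iff.mp hij)

theorem Nat.card_fiber_eq_count_ofFn {n : ℕ} (a : Fin n → ℕ) (j : ℕ) :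
    Nat.card {i // a i = j} = (List.ofFn a).count j := by
  rw [Nat.card_eq_fintype_card, Fintype.card_subtype, ← Multiset.coe_count, ← Fin.univ_val_map,
    Multiset.count_map, card_def, filter_val]
  simp_rw [eq_comm]

theorem List.ofFn_eq_of_monotone_of_count_eq {α : Type*} [LinearOrder α] {m n : ℕ} {a : Fin m → α}
    {b : Fin n → α} (ha : Monotone a) (hb : Monotone b)
    (h : ∀ j, (List.ofFn a).count j = (List.ofFn b).count j) : List.ofFn a = List.ofFn b :=
  List.Perm.eq_of_pairwise' ha.sortedLE_ofFn.pairwise hb.sortedLE_ofFn.pairwise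
    (List.perm_iff_count.mpr h)

noncomputable section

namespace NCSym

variable {N : ℕ}

def wordSum (n : ℕ) (P : (Fin n → Fin N) → Prop) : FreeAlgebra ℚ (Fin N) :=
  ∑ w ∈ univ.filter P, uword w

theorem wordSum_congr {n : ℕ} {P Q : (Fin n → Fin N) → Prop} (h : ∀ w, P w ↔ Q w) :
    wordSum n P = wordSum n Q := by
  rw [show P = Q from funext fun w => propext (h w)]

theorem wordSum_eq_sum_ite {n : ℕ} (P : (Fin n → Fin N) → Prop) [DecidablePred P] :
    wordSum n P = ∑ w, if P w then uword w else 0 := by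
  rw [wordSum, sum_filter]
  exact sum_congr rfl fun _ _ => by congr

theorem wordSum_split {n : ℕ} (P R : (Fin n → Fin N) → Prop) :
    wordSum n P = wordSum n (fun w => P w ∧ ¬R w) + wordSum n (fun w => P w ∧ R w) := by
  rw [wordSum, ← sum_filter_not_add_sum_filter (univ.filter P) R]
  simp only [filter_filter, wordSum]
  congr

theorem wordSum_zero {P : (Fin 0 → Fin N) → Prop} (hP : ∀ w, P w) : wordSum 0 P = 1 := by
  simp [wordSum, filter_true_of_mem fun w _ => hP w, uword]

theorem wordSum_eq_zero {n : ℕ} {P : (Fin n → Fin N) → Prop} (hP : ∀ w, ¬P w) :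
    wordSum n P = 0 := by
  simp [wordSum, filter_false_of_mem fun w _ => hP w]

theorem uword_append {p q : ℕ} (u : Fin p → Fin N) (v : Fin q → Fin N) :
    uword (Fin.append u v) = uword u * uword v := by
  simp [uword, List.ofFn_add]

theorem uword_cons {k : ℕ} (a : Fin N) (v : Fin k → Fin N) :
    uword (Fin.cons a v : Fin (k + 1) → Fin N) = FreeAlgebra.ι ℚ a * uword v := by
  simp [uword, List.ofFn_succ]

theorem uword_snoc {k : ℕ} (v : Fin k → Fin N) (a : Fin N) :
    uword (Fin.snoc v a : Fin (k + 1) → Fin N) = uword v * FreeAlgebra.ι ℚ a := by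
  rw [uword, List.ofFn_succ_last]
  simp [uword]

theorem wordSum_mul {p q : ℕ} (P : (Fin p → Fin N) → Prop) (Q : (Fin q → Fin N) → Prop) :
    wordSum p P * wordSum q Q =
      wordSum (p + q) fun w =>
        P (fun i => w (Fin.castAdd q i)) ∧ Q (fun i => w (Fin.natAdd p i)) := by
  simp only [wordSum_eq_sum_ite, sum_mul_sum, ← Fintype.sum_prod_type']
  refine Fintype.sum_equiv (Fin.appendEquiv p q) _ _ fun ⟨u, v⟩ => ?_
  rw [show Fin.appendEquiv p q (u, v) = Fin.append u v from rfl, uword_append]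
  simp [← ite_and, and_comm]

theorem wordSum_cons {k : ℕ} (a : Fin N) (Q : (Fin k → Fin N) → Prop) :
    wordSum (k + 1) (fun w => w 0 = a ∧ Q (Fin.tail w)) = FreeAlgebra.ι ℚ a * wordSum k Q := by
  simp only [wordSum_eq_sum_ite, mul_sum]
  rw [← (Fin.consEquiv fun _ => Fin N).sum_comp, Fintype.sum_prod_type]
  simp [Fin.consEquiv, uword_cons, ite_and]

theorem wordSum_snoc {k : ℕ} (a : Fin N) (Q : (Fin k → Fin N) → Prop) :
    wordSum (k + 1) (fun w => w (Fin.last k) = a ∧ Q (Fin.init w)) =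
      wordSum k Q * FreeAlgebra.ι ℚ a := by
  simp only [wordSum_eq_sum_ite, sum_mul]
  rw [← (Fin.snocEquiv fun _ => Fin N).sum_comp, Fintype.sum_prod_type]
  simp [Fin.snocEquiv, uword_snoc, ite_and]

theorem eU_eq_wordSum (k : ℕ) : eU N k = wordSum k StrictAnti := by
  unfold eU wordSum; congr

theorem hUmono_eq_wordSum (k : ℕ) : hUmono N k = wordSum k Monotone := by
  unfold hUmono wordSum; congr

variable (N) in
def eBelow (n k : ℕ) : FreeAlgebra ℚ (Fin N) :=
  wordSum k fun w => StrictAnti w ∧ ∀ i, (w i : ℕ) < n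

variable (N) in
def hBelow (n k : ℕ) : FreeAlgebra ℚ (Fin N) :=
  wordSum k fun w => Monotone w ∧ ∀ i, (w i : ℕ) < n

theorem eBelow_zero_right (n : ℕ) : eBelow N n 0 = 1 :=
  wordSum_zero fun _ => ⟨fun i => i.elim0, fun i => i.elim0⟩

theorem hBelow_zero_right (n : ℕ) : hBelow N n 0 = 1 :=
  wordSum_zero fun _ => ⟨fun i => i.elim0, fun i => i.elim0⟩

theorem eBelow_succ {n : ℕ} (hn : n < N) (k : ℕ) :
    eBelow N (n + 1) (k + 1) = eBelow N n (k + 1) + FreeAlgebra.ι ℚ ⟨n, hn⟩ * eBelow N n k := by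
  unfold eBelow
  rw [wordSum_split _ (fun w => w 0 = ⟨n, hn⟩), ← wordSum_cons]
  congr 1 <;> refine wordSum_congr fun w => ?_
  · refine ⟨fun ⟨⟨hw, hlt⟩, hne⟩ => ⟨hw, fun i => ?_⟩, fun ⟨hw, hlt⟩ => ⟨⟨hw, fun i => ?_⟩, ?_⟩⟩
    · have : w i ≤ w 0 := hw.antitone (Fin.zero_le i)
      have : (w 0 : ℕ) ≠ n := fun h => hne (Fin.ext h)
      have := hlt 0
      omega
    · exact Nat.lt_succ_of_lt (hlt i)
    · exact fun h => (hlt 0).ne (congrArg Fin.val h)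
  · obtain ⟨a, v, rfl⟩ : ∃ a v, w = Fin.cons a v := ⟨w 0, Fin.tail w, (Fin.cons_self_tail w).symm⟩
    simp only [Fin.strictAnti_cons, Fin.forall_fin_succ, Fin.cons_zero, Fin.cons_succ,
      Fin.tail_cons]
    constructor
    · rintro ⟨⟨⟨hva, hv⟩, -, hlt⟩, rfl⟩
      exact ⟨rfl, hv, fun i => hva i⟩
    · rintro ⟨rfl, hv, hlt⟩
      exact ⟨⟨⟨hlt, hv⟩, Nat.lt_succ_self n, fun i => Nat.lt_succ_of_lt (hlt i)⟩, rfl⟩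

theorem hBelow_succ {n : ℕ} (hn : n < N) (k : ℕ) :
    hBelow N (n + 1) (k + 1) =
      hBelow N n (k + 1) + hBelow N (n + 1) k * FreeAlgebra.ι ℚ ⟨n, hn⟩ := by
  unfold hBelow
  rw [wordSum_split _ (fun w => w (Fin.last k) = ⟨n, hn⟩), ← wordSum_snoc]
  congr 1 <;> refine wordSum_congr fun w => ?_
  · refine ⟨fun ⟨⟨hw, hlt⟩, hne⟩ => ⟨hw, fun i => ?_⟩, fun ⟨hw, hlt⟩ => ⟨⟨hw, fun i => ?_⟩, ?_⟩⟩
    · have : w i ≤ w (Fin.last k) := hw (Fin.le_last i)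
      have : (w (Fin.last k) : ℕ) ≠ n := fun h => hne (Fin.ext h)
      have := hlt (Fin.last k)
      omega
    · exact Nat.lt_succ_of_lt (hlt i)
    · exact fun h => (hlt (Fin.last k)).ne (congrArg Fin.val h)
  · obtain ⟨v, a, rfl⟩ : ∃ v a, w = Fin.snoc v a :=
      ⟨Fin.init w, w (Fin.last k), (Fin.snoc_init_self w).symm⟩
    simp only [Fin.monotone_snoc, Fin.forall_fin_succ', Fin.snoc_last, Fin.snoc_castSucc,
      Fin.init_snoc]
    constructor
    · rintro ⟨⟨⟨-, hv⟩, hlt, -⟩, rfl⟩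
      exact ⟨rfl, hv, hlt⟩
    · rintro ⟨rfl, hv, hlt⟩
      exact ⟨⟨⟨fun i => Fin.le_def.mpr (Nat.lt_succ_iff.mp (hlt i)), hv⟩, hlt,
        Nat.lt_succ_self n⟩, rfl⟩

theorem eBelow_zero_left (k : ℕ) : eBelow N 0 (k + 1) = 0 :=
  wordSum_eq_zero fun _ hw => Nat.not_lt_zero _ (hw.2 0)

theorem hBelow_zero_left (k : ℕ) : hBelow N 0 (k + 1) = 0 :=
  wordSum_eq_zero fun _ hw => Nat.not_lt_zero _ (hw.2 0)

theorem eBelow_self (k : ℕ) : eBelow N N k = eU N k := by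
  rw [eU_eq_wordSum]
  exact wordSum_congr fun w => and_iff_left fun i => (w i).2

theorem hBelow_self (k : ℕ) : hBelow N N k = hUmono N k := by
  rw [hUmono_eq_wordSum]
  exact wordSum_congr fun w => and_iff_left fun i => (w i).2

section NewtonIdentity

open PowerSeries

variable (N) in
def eSeries (n : ℕ) : PowerSeries (FreeAlgebra ℚ (Fin N)) :=
  mk fun k => (-1 : ℚ) ^ k • eBelow N n k

variable (N) in
def hSeries (n : ℕ) : PowerSeries (FreeAlgebra ℚ (Fin N)) :=
  mk (hBelow N n)

theorem eSeries_zero : eSeries N 0 = 1 := by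
  ext (_ | k) <;> simp [eSeries, coeff_one, eBelow_zero_right, eBelow_zero_left]

theorem hSeries_zero : hSeries N 0 = 1 := by
  ext (_ | k) <;> simp [hSeries, coeff_one, hBelow_zero_right, hBelow_zero_left]

theorem eSeries_succ {n : ℕ} (hn : n < N) :
    eSeries N (n + 1) = (1 - C (FreeAlgebra.ι ℚ ⟨n, hn⟩) * X) * eSeries N n := by
  ext (_ | k)
  · simp [eSeries, eBelow_zero_right, coeff_zero_eq_constantCoeff_apply]
  · simp only [eSeries, sub_mul, one_mul, mul_assoc, map_sub, coeff_C_mul, coeff_succ_X_mul,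
      coeff_mk, eBelow_succ hn, pow_succ, mul_smul_comm, mul_smul, smul_add]
    module

theorem hSeries_succ_mul {n : ℕ} (hn : n < N) :
    hSeries N (n + 1) * (1 - C (FreeAlgebra.ι ℚ ⟨n, hn⟩) * X) = hSeries N n := by
  ext (_ | k)
  · simp [hSeries, hBelow_zero_right, coeff_zero_eq_constantCoeff_apply]
  · simp only [hSeries, mul_sub, mul_one, ← mul_assoc, map_sub, coeff_mul_C, coeff_succ_mul_X,
      coeff_mk, hBelow_succ hn]
    abel

theorem eSeries_mul_hSeries {n : ℕ} (hn : n ≤ N) : eSeries N n * hSeries N n = 1 := by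
  induction n with
  | zero => rw [eSeries_zero, hSeries_zero, one_mul]
  | succ n ih =>
    have hn' : n < N := hn
    set f := 1 - C (FreeAlgebra.ι ℚ (⟨n, hn'⟩ : Fin N)) * X
    have hf : f * invOfUnit f 1 = 1 := mul_invOfUnit _ _ (by simp [f])
    -- `eSeries N n * hSeries N (n + 1)` is a left inverse of `f`, hence equals its right inverse.
    have key : eSeries N n * hSeries N (n + 1) = invOfUnit f 1 := calc
      _ = eSeries N n * (hSeries N (n + 1) * f) * invOfUnit f 1 := by
        rw [mul_assoc, mul_assoc, hf, mul_one]
      _ = invOfUnit f 1 := by rw [hSeries_succ_mul, ih hn'.le, one_mul]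
    rw [eSeries_succ hn', mul_assoc, key, hf]

theorem sum_antidiagonal_eU_mul_hUmono {k : ℕ} (hk : k ≠ 0) :
    ∑ p ∈ antidiagonal k, (-1 : ℚ) ^ p.1 • (eU N p.1 * hUmono N p.2) = 0 := by
  have h := congrArg (coeff k) (eSeries_mul_hSeries (le_refl N))
  rw [coeff_mul, coeff_one, if_neg hk] at h
  simpa [eSeries, hSeries, eBelow_self, hBelow_self, smul_mul_assoc] using h

theorem eU_zero : eU N 0 = 1 := by
  rw [← eBelow_self, eBelow_zero_right]

theorem hUmono_zero : hUmono N 0 = 1 := by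
  rw [← hBelow_self, hBelow_zero_right]

theorem hUmono_succ (k : ℕ) :
    hUmono N (k + 1) =
      ∑ i ∈ range (k + 1), (-1 : ℚ) ^ i • (eU N (i + 1) * hUmono N (k - i)) := by
  have h := sum_antidiagonal_eU_mul_hUmono (N := N) k.succ_ne_zero
  rw [Nat.sum_antidiagonal_eq_sum_range_succ (fun i j => (-1 : ℚ) ^ i • (eU N i * hUmono N j)),
    sum_range_succ'] at h
  simp only [pow_succ, mul_neg_one, neg_smul, sum_neg_distrib, Nat.succ_sub_succ, eU_zero,
    pow_zero, one_smul, one_mul, Nat.sub_zero] at h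
  exact (neg_add_eq_zero.mp h).symm

theorem hU_eq_hUmono (k : ℕ) : hU N k = hUmono N k := by
  induction k using Nat.strong_induction_on with
  | _ k ih =>
    match k with
    | 0 => rw [hU, hUmono_zero]
    | k + 1 =>
      rw [hU, hUmono_succ]
      exact sum_congr rfl fun i hi => by rw [ih (k - i) (by omega)]

end NewtonIdentity

def blockSeq (D : ℕ → ℕ) : (L : List ℕ) → Fin (L.map D).sum → ℕ
  | [] => Fin.elim0
  | i :: L => Fin.append (fun _ : Fin (D i) => i) (blockSeq D L)

theorem ofFn_blockSeq (D : ℕ → ℕ) (L : List ℕ) :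
    List.ofFn (blockSeq D L) = L.flatMap fun i => List.replicate (D i) i := by
  induction L with
  | nil => rfl
  | cons i L ih =>
    refine (List.ofFn_fin_append _ _).trans ?_
    rw [List.ofFn_const, List.flatMap_cons, ← ih]
    rfl

theorem blockSeq_mem (D : ℕ → ℕ) (L : List ℕ) (p : Fin (L.map D).sum) : blockSeq D L p ∈ L := by
  have h : blockSeq D L p ∈ List.ofFn (blockSeq D L) := List.mem_ofFn.mpr ⟨p, rfl⟩
  rw [ofFn_blockSeq] at h
  obtain ⟨i, hi, hp⟩ := List.mem_flatMap.mp h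
  rwa [(List.mem_replicate.mp hp).2]

theorem monotone_blockSeq (D : ℕ → ℕ) {L : List ℕ} (hL : L.Pairwise (· < ·)) :
    Monotone (blockSeq D L) := by
  rw [← List.sortedLE_ofFn_iff, List.sortedLE_iff_pairwise, ofFn_blockSeq, List.pairwise_flatMap]
  refine ⟨fun i _ => List.pairwise_replicate.mpr (Or.inr le_rfl), hL.imp fun hij => ?_⟩
  intro x hx y hy
  rw [(List.mem_replicate.mp hx).2, (List.mem_replicate.mp hy).2]
  exact hij.le

theorem count_ofFn_blockSeq (D : ℕ → ℕ) {L : List ℕ} (hL : L.Nodup) (j : ℕ) :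
    (List.ofFn (blockSeq D L)).count j = if j ∈ L then D j else 0 := by
  rw [ofFn_blockSeq]
  induction L with
  | nil => simp
  | cons i L ih =>
    rw [List.nodup_cons] at hL
    rw [List.flatMap_cons, List.count_append, ih hL.2, List.count_replicate]
    by_cases hj : j = i
    · subst hj; simp [hL.1]
    · simp [hj, Ne.symm hj]

theorem forall_mem_desW_iff_isChain {n : ℕ} (a : Fin n → ℕ) (w : Fin n → Fin N) :
    (∀ i : Fin n, ∀ h : (i : ℕ) + 1 < n, i ∈ DesW w → a i < a ⟨(i : ℕ) + 1, h⟩) ↔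
      (List.ofFn fun i => (a i, w i)).IsChain fun x y => y.2 < x.2 → x.1 < y.1 := by
  rw [List.isChain_ofFn]
  simp only [DesW, mem_filter, mem_univ, true_and, Fin.forall_iff]
  exact ⟨fun h i hi hw => h i _ hi ⟨hi, hw⟩, fun h i _ hi ⟨_, hw⟩ => h i hi hw⟩

theorem isChain_const_iff_monotone {k : ℕ} (c : ℕ) (v : Fin k → Fin N) :
    (List.ofFn fun j => (c, v j)).IsChain (fun x y : ℕ × Fin N => y.2 < x.2 → x.1 < y.1) ↔
      Monotone v := by
  rw [← List.sortedLE_ofFn_iff, List.sortedLE_iff_isChain,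
    show (List.ofFn fun j => (c, v j)) = (List.ofFn v).map (c, ·) from List.map_ofFn.symm,
    List.isChain_map]
  simp

theorem isChain_append_const_iff {m s : ℕ} (c : ℕ) (a : Fin s → ℕ) (ha : ∀ j, c < a j)
    (w : Fin (m + s) → Fin N) :
    (List.ofFn fun p => (Fin.append (fun _ : Fin m => c) a p, w p)).IsChain
        (fun x y : ℕ × Fin N => y.2 < x.2 → x.1 < y.1) ↔
      Monotone (fun j => w (Fin.castAdd s j)) ∧
        (List.ofFn fun j => (a j, w (Fin.natAdd m j))).IsChain
          (fun x y : ℕ × Fin N => y.2 < x.2 → x.1 < y.1) := by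
  rw [List.ofFn_add]
  simp only [show ∀ i : Fin m, i.castLE (Nat.le_add_right m s) = Fin.castAdd s i from fun _ => rfl,
    Fin.append_left, Fin.append_right]
  rw [List.isChain_append, isChain_const_iff_monotone]
  refine and_congr_right' (and_iff_left fun x hx y hy _ => ?_)
  obtain ⟨i, rfl⟩ := List.mem_ofFn.mp (List.mem_of_getLast? hx)
  obtain ⟨j, rfl⟩ := List.mem_ofFn.mp (List.mem_of_mem_head? hy)
  exact ha j

theorem prod_hUmono_eq_wordSum (D : ℕ → ℕ) :
    ∀ L : List ℕ, L.Pairwise (· < ·) →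
      (L.map fun i => hUmono N (D i)).prod =
        wordSum _ fun w => ∀ i h, i ∈ DesW w → blockSeq D L i < blockSeq D L ⟨(i : ℕ) + 1, h⟩
  | [], _ => (wordSum_zero fun _ i => i.elim0).symm
  | i₀ :: L, hL => by
    rw [List.map_cons, List.prod_cons, prod_hUmono_eq_wordSum D L hL.of_cons, hUmono_eq_wordSum,
      wordSum_mul]
    refine wordSum_congr fun w => Iff.symm ?_
    have hlt : ∀ j, i₀ < blockSeq D L j := fun j =>
      List.rel_of_pairwise_cons hL (blockSeq_mem D L j)
    exact ((forall_mem_desW_iff_isChain (Fin.append (fun _ => i₀) (blockSeq D L)) w).trans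
      (isChain_append_const_iff i₀ _ hlt w)).trans
        (and_congr_right' (forall_mem_desW_iff_isChain _ _).symm)

theorem count_ofFn_blockSeq_sort (d : ℕ →₀ ℕ) (j : ℕ) :
    (List.ofFn (blockSeq d (d.support.sort (· ≤ ·)))).count j = d j := by
  rw [count_ofFn_blockSeq d (sort_nodup _ _)]
  split_ifs with hj
  · rfl
  · exact (Finsupp.notMem_support_iff.mp (mt (mem_sort _).mpr hj)).symm

theorem ofFn_eq_blockSeq_sort {d : ℕ →₀ ℕ} {n : ℕ} {a : Fin n → ℕ} (ha : Monotone a)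
    (hfib : ∀ j, Nat.card {i // a i = j} = d j) :
    List.ofFn a = List.ofFn (blockSeq d (d.support.sort (· ≤ ·))) :=
  List.ofFn_eq_of_monotone_of_count_eq ha (monotone_blockSeq d (sortedLT_sort _).pairwise)
    fun j => by rw [← Nat.card_fiber_eq_count_ofFn, hfib, count_ofFn_blockSeq_sort]

theorem coeff_fundQS_eq_zero {n : ℕ} (d : ℕ →₀ ℕ) (S : Finset (Fin n))
    (hn : n ≠ ((d.support.sort (· ≤ ·)).map d).sum) :
    MvPowerSeries.coeff d (fundQS n S) = 0 := by
  change (Nat.card _ : ℚ) = 0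
  rw [Nat.cast_eq_zero, Nat.card_eq_zero]
  exact Or.inl ⟨fun ⟨a, ha, _, hfib⟩ => hn (by
    simpa using congrArg List.length (ofFn_eq_blockSeq_sort ha hfib))⟩

theorem coeff_fundQS_desW (d : ℕ →₀ ℕ) (w : Fin ((d.support.sort (· ≤ ·)).map d).sum → Fin N) :
    MvPowerSeries.coeff d (fundQS _ (DesW w)) =
      if ∀ i h, i ∈ DesW w → blockSeq d (d.support.sort (· ≤ ·)) i <
          blockSeq d (d.support.sort (· ≤ ·)) ⟨(i : ℕ) + 1, h⟩ then 1 else 0 := by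
  change (Nat.card _ : ℚ) = _
  have huniq : ∀ a, Monotone a → (∀ j, Nat.card {i // a i = j} = d j) →
      a = blockSeq d (d.support.sort (· ≤ ·)) :=
    fun a ha hfib => List.ofFn_injective (ofFn_eq_blockSeq_sort ha hfib)
  split_ifs with hdes
  · rw [Nat.cast_eq_one, Nat.card_eq_one_iff_unique]
    refine ⟨⟨fun ⟨a, ha, _, hfa⟩ ⟨b, hb, _, hfb⟩ => Subtype.ext ((huniq a ha hfa).trans
      (huniq b hb hfb).symm)⟩, ⟨⟨_, monotone_blockSeq d (sortedLT_sort _).pairwise, hdes,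
        fun j => by rw [Nat.card_fiber_eq_count_ofFn, count_ofFn_blockSeq_sort]⟩⟩⟩
  · rw [Nat.cast_eq_zero, Nat.card_eq_zero]
    exact Or.inl ⟨fun ⟨a, ha, hades, hfib⟩ => hdes (huniq a ha hfib ▸ hades)⟩

end NCSym

end

open NCSym

/-- `Ω(x,u) = Σ_w F_{d, Des(w)}(x) · u_w`, the sum over all words
`w` on `{1, …, N}`. -/
theorem stmt8 (N : ℕ) :
    ∀ d : ℕ →₀ ℕ,
      MvPowerSeries.coeff d (Omega N) =
        ∑ᶠ n : ℕ, ∑ w : Fin n → Fin N,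
          (MvPowerSeries.coeff d (fundQS n (DesW w))) • uword w := by
  intro d
  rw [finsum_eq_single _ ((d.support.sort (· ≤ ·)).map d).sum fun n hn =>
    sum_eq_zero fun w _ => by rw [coeff_fundQS_eq_zero d _ hn, zero_smul]]
  change ((d.support.sort (· ≤ ·)).map fun i => hU N (d i)).prod = _
  simp only [hU_eq_hUmono, prod_hUmono_eq_wordSum d _ (sortedLT_sort _).pairwise,
    wordSum_eq_sum_ite, coeff_fundQS_desW, ite_smul, one_smul, zero_smul]
end

section
/- Suppose the two-sided ideal I of U satisfies the commutation relation, γ ∈ I^⊥, and Ω(x,u) ≡ Σ_λ g_λ(x) f_λ(u) mod I[[x]] for a symmetric function basis {g_λ} and noncommutative elements f_λ(u) ∈ U. Then F_γ(x) := ⟨Ω(x,u), γ⟩ equals Σ_λ g_λ(x)·⟨f_λ(u), γ⟩; in particular F_γ is a symmetric function. -/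
open scoped Classical

/-- A partition, encoded as a weakly decreasing list of positive integers. -/
def IsPartitionList (l : List ℕ) : Prop :=
  l.Pairwise (· ≥ ·) ∧ ∀ i ∈ l, 0 < i

/-- The monomial symmetric function `m_λ`. -/
noncomputable def msym (l : List ℕ) : MvPowerSeries ℕ ℚ :=
  fun d => if d.support.val.map d = (l : Multiset ℕ) then 1 else 0

/-- The space of symmetric functions: the span of the monomial symmetric functions. -/
noncomputable def SymQ : Submodule ℚ (MvPowerSeries ℕ ℚ) :=
  Submodule.span ℚ {f | ∃ l : List ℕ, IsPartitionList l ∧ f = msym l}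

/-- Partitions, as weakly decreasing lists of positive integers. -/
def ParL := {l : List ℕ // IsPartitionList l}

/-- The pairing between `U` and the free module `U*` on words, with
`⟨u_w, v⟩ = δ_{w,v}`. -/
noncomputable def pairU {N : ℕ} (z : FreeAlgebra ℚ (Fin N))
    (γ : FreeMonoid (Fin N) →₀ ℚ) : ℚ :=
  ((FreeAlgebra.basisFreeMonoid ℚ (Fin N)).repr z).sum fun w c => c * γ w

section Pairing

variable {N : ℕ}

noncomputable def pairULinear (γ : FreeMonoid (Fin N) →₀ ℚ) : FreeAlgebra ℚ (Fin N) →ₗ[ℚ] ℚ :=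
  (Finsupp.lsum ℚ fun w => LinearMap.toSpanSingleton ℚ ℚ (γ w)).comp
    (FreeAlgebra.basisFreeMonoid ℚ (Fin N)).repr.toLinearMap

lemma pairU_eq_pairULinear (z : FreeAlgebra ℚ (Fin N)) (γ : FreeMonoid (Fin N) →₀ ℚ) :
    pairU z γ = pairULinear γ z := by
  simp [pairULinear, pairU, LinearMap.toSpanSingleton_apply, Finsupp.sum, smul_eq_mul]

lemma pairU_sub (z w : FreeAlgebra ℚ (Fin N)) (γ : FreeMonoid (Fin N) →₀ ℚ) :
    pairU (z - w) γ = pairU z γ - pairU w γ := by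
  simp only [pairU_eq_pairULinear, map_sub]

lemma pairU_finsum_smul {ι : Type*} {c : ι → ℚ} (hc : (Function.support c).Finite)
    (f : ι → FreeAlgebra ℚ (Fin N)) (γ : FreeMonoid (Fin N) →₀ ℚ) :
    pairU (∑ᶠ i, c i • f i) γ = ∑ᶠ i, c i * pairU (f i) γ := by
  have hsupp : (Function.support fun i => c i • f i).Finite :=
    hc.subset (Function.support_smul_subset_left c f)
  rw [pairU_eq_pairULinear, map_finsum (pairULinear γ) hsupp]
  simp only [map_smul, smul_eq_mul, pairU_eq_pairULinear]

lemma pairU_eq_of_sub_mem {I : TwoSidedIdeal (FreeAlgebra ℚ (Fin N))}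
    {γ : FreeMonoid (Fin N) →₀ ℚ} (hγ : ∀ z ∈ I, pairU z γ = 0)
    {z w : FreeAlgebra ℚ (Fin N)} (h : z - w ∈ I) : pairU z γ = pairU w γ := by
  rw [← sub_eq_zero, ← pairU_sub]
  exact hγ _ h

end Pairing

lemma msym_coeff_equivMapDomain (l : List ℕ) (π : Equiv.Perm ℕ) (d : ℕ →₀ ℕ) :
    MvPowerSeries.coeff (Finsupp.equivMapDomain π d) (msym l)
      = MvPowerSeries.coeff d (msym l) := by
  have hval : (Finsupp.equivMapDomain π d).support.val.map (Finsupp.equivMapDomain π d)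
      = d.support.val.map d := by
    change (d.support.map π.toEmbedding).val.map _ = _
    simp [Finset.map_val, Multiset.map_map, Function.comp_def]
  simp only [MvPowerSeries.coeff_apply, msym, hval]

lemma coeff_equivMapDomain_of_mem_symQ {f : MvPowerSeries ℕ ℚ} (hf : f ∈ SymQ)
    (π : Equiv.Perm ℕ) (d : ℕ →₀ ℕ) :
    MvPowerSeries.coeff (Finsupp.equivMapDomain π d) f = MvPowerSeries.coeff d f := by
  induction hf using Submodule.span_induction with
  | mem x hx => obtain ⟨l, -, rfl⟩ := hx; exact msym_coeff_equivMapDomain l π d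
  | zero => simp
  | add x y _ _ ihx ihy => simp [ihx, ihy]
  | smul c x _ ih => simp [ih]

theorem stmt10_general (N : ℕ) (I : TwoSidedIdeal (FreeAlgebra ℚ (Fin N)))
    (γ : FreeMonoid (Fin N) →₀ ℚ)
    (hγ : ∀ z ∈ I, pairU z γ = 0)
    (g : ParL → MvPowerSeries ℕ ℚ)
    (hgmem : ∀ l, g l ∈ SymQ)
    (fu : ParL → FreeAlgebra ℚ (Fin N))
    (hfin : ∀ d : ℕ →₀ ℕ, {l : ParL | MvPowerSeries.coeff d (g l) ≠ 0}.Finite)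
    (hΩ : ∀ d : ℕ →₀ ℕ,
      MvPowerSeries.coeff d (Omega N)
        - ∑ᶠ l : ParL, (MvPowerSeries.coeff d (g l)) • fu l ∈ I) :
    (∀ d : ℕ →₀ ℕ,
        pairU (MvPowerSeries.coeff d (Omega N)) γ =
          ∑ᶠ l : ParL, MvPowerSeries.coeff d (g l) * pairU (fu l) γ)
      ∧ (∀ π : Equiv.Perm ℕ, ∀ d : ℕ →₀ ℕ,
          pairU (MvPowerSeries.coeff (Finsupp.equivMapDomain π d) (Omega N)) γ =
            pairU (MvPowerSeries.coeff d (Omega N)) γ) := by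
  have expansion : ∀ d : ℕ →₀ ℕ,
      pairU (MvPowerSeries.coeff d (Omega N)) γ =
        ∑ᶠ l : ParL, MvPowerSeries.coeff d (g l) * pairU (fu l) γ := fun d => by
    rw [pairU_eq_of_sub_mem hγ (hΩ d), pairU_finsum_smul (hfin d)]
  refine ⟨expansion, fun π d => ?_⟩
  simp only [expansion, coeff_equivMapDomain_of_mem_symQ (hgmem _)]

/-- if `I` satisfies the commutation relation, `γ ∈ I^⊥`, and
`Ω(x,u) ≡ Σ_λ g_λ(x) f_λ(u) mod I[[x]]` for a symmetric function basis `{g_λ}`,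
then `F_γ(x) = Σ_λ g_λ(x) ⟨f_λ(u), γ⟩`; in particular `F_γ` is a symmetric
function (invariant under all permutations of the variables). -/
theorem stmt10 (N : ℕ) (I : TwoSidedIdeal (FreeAlgebra ℚ (Fin N)))
    (hcomm : ∀ k l : ℕ, 1 ≤ k → 1 ≤ l →
      eU N k * eU N l - eU N l * eU N k ∈ I)
    (γ : FreeMonoid (Fin N) →₀ ℚ)
    (hγ : ∀ z ∈ I, pairU z γ = 0)
    (g : ParL → MvPowerSeries ℕ ℚ)
    (hgmem : ∀ l, g l ∈ SymQ) (hgind : LinearIndependent ℚ g)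
    (hgspan : Submodule.span ℚ (Set.range g) = SymQ)
    (fu : ParL → FreeAlgebra ℚ (Fin N))
    (hfin : ∀ d : ℕ →₀ ℕ, {l : ParL | MvPowerSeries.coeff d (g l) ≠ 0}.Finite)
    (hΩ : ∀ d : ℕ →₀ ℕ,
      MvPowerSeries.coeff d (Omega N)
        - ∑ᶠ l : ParL, (MvPowerSeries.coeff d (g l)) • fu l ∈ I) :
    (∀ d : ℕ →₀ ℕ,
        pairU (MvPowerSeries.coeff d (Omega N)) γ =
          ∑ᶠ l : ParL, MvPowerSeries.coeff d (g l) * pairU (fu l) γ)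
      ∧ (∀ π : Equiv.Perm ℕ, ∀ d : ℕ →₀ ℕ,
          pairU (MvPowerSeries.coeff (Finsupp.equivMapDomain π d) (Omega N)) γ =
            pairU (MvPowerSeries.coeff d (Omega N)) γ) :=
  stmt10_general N I γ hγ g hgmem fu hfin hΩ
end

section
/- For two words w and w' on {1,...,N}, u_w ≡ u_{w'} mod I_plac if and only if the RSK insertion tableaux of w and w' coincide: P(w) = P(w'). -/
open scoped Classical

section RSK

variable {α : Type*} [LinearOrder α]

/-- Insert `x` into a row: bump the leftmost entry strictly greater than `x`,
or append `x` at the end if there is none. Returns the new row and the bumped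
entry (if any). -/
def bumpRow : List α → α → List α × Option α
  | [], x => ([x], none)
  | a :: as, x =>
      if a ≤ x then
        let r := bumpRow as x
        (a :: r.1, r.2)
      else (x :: as, some a)

/-- RSK row insertion of a letter into a tableau (given as its list of rows). -/
def insertTab : List (List α) → α → List (List α)
  | [], x => [[x]]
  | r :: rest, x =>
      match bumpRow r x with
      | (r', none) => r' :: rest
      | (r', some y) => r' :: insertTab rest y

/-- The RSK insertion tableau `P(w)` of a word `w`. -/
def RSKP (w : List α) : List (List α) := w.foldl insertTab []

/-- Semistandard Young tableaux, encoded as lists of rows: rows are nonempty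
and weakly increasing, row lengths are weakly decreasing, and columns are
strictly increasing. -/
def IsSSYT (T : List (List α)) : Prop :=
  (∀ r ∈ T, r ≠ []) ∧
  (T.map List.length).Pairwise (· ≥ ·) ∧
  (∀ r ∈ T, r.Pairwise (· ≤ ·)) ∧
  ∀ (i j c : ℕ) (hi : i < T.length) (hj : j < T.length), i < j →
    ∀ (hc : c < (T.get ⟨j, hj⟩).length) (hc' : c < (T.get ⟨i, hi⟩).length),
      (T.get ⟨i, hi⟩).get ⟨c, hc'⟩ < (T.get ⟨j, hj⟩).get ⟨c, hc⟩

/-- The column reading word of a tableau: read each column bottom to top,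
columns left to right. -/
def colWord (T : List (List α)) : List α :=
  (List.range ((T.headD []).length)).flatMap fun c =>
    T.reverse.filterMap fun r => r[c]?

end RSK

/-- The monomial `u_w` of a word `w`, in `U = ℚ⟨u_1,…,u_N⟩`. -/
noncomputable def uList {N : ℕ} (w : List (Fin N)) : FreeAlgebra ℚ (Fin N) :=
  (w.map (FreeAlgebra.ι ℚ)).prod

/-- The plactic ideal of `U = ℚ⟨u_1,…,u_N⟩`. -/
noncomputable def Iplac (N : ℕ) : TwoSidedIdeal (FreeAlgebra ℚ (Fin N)) :=
  TwoSidedIdeal.span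
    ({z | ∃ a b c : Fin N, a ≤ b ∧ b < c ∧
        z = FreeAlgebra.ι ℚ a * FreeAlgebra.ι ℚ c * FreeAlgebra.ι ℚ b
          - FreeAlgebra.ι ℚ c * FreeAlgebra.ι ℚ a * FreeAlgebra.ι ℚ b} ∪
     {z | ∃ a b c : Fin N, a < b ∧ b ≤ c ∧
        z = FreeAlgebra.ι ℚ b * FreeAlgebra.ι ℚ a * FreeAlgebra.ι ℚ c
          - FreeAlgebra.ι ℚ b * FreeAlgebra.ι ℚ c * FreeAlgebra.ι ℚ a})

/-!
Both sides say that `w` and `w'` are equal in the plactic monoid, the quotient of the free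
monoid by the congruence generated by the Knuth relations `acb ~ cab` (`a ≤ b < c`) and
`bac ~ bca` (`a < b ≤ c`).

For the ideal: `u_w - u_{w'}` lies in `I_plac` when `w ~ w'` because `I_plac` is spanned by the
differences of the two sides of a Knuth relation; conversely `I_plac` lies in the kernel of the
algebra map `U → ℚ[plactic monoid]`, `u_i ↦ [i]`, which sends `u_w` to the basis vector `[w]`.

For the tableau: bumping `y` out of a sorted row `p y s` by `x` is realised by Knuth moves
`y p x s ~ p y s x` on the row reading word, so every word is Knuth equivalent to the reading
word of its insertion tableau. Conversely (Knuth's lemma) inserting the two sides of a Knuth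
relation into a sorted row gives the same row and bumps out words that are equal or again the
two sides of a Knuth relation, so by induction on the rows they have the same insertion tableau.
-/

section Bumping

variable {α : Type*} [LinearOrder α] {r : List α} {x y : α}

@[simp] lemma bumpRow_nil (x : α) : bumpRow [] x = ([x], none) := rfl

lemma bumpRow_cons_of_le {e : α} (t : List α) (h : e ≤ x) :
    bumpRow (e :: t) x = (e :: (bumpRow t x).1, (bumpRow t x).2) := by
  simp [bumpRow, h]

lemma bumpRow_cons_of_lt {e : α} (t : List α) (h : x < e) :
    bumpRow (e :: t) x = (x :: t, some e) := by
  simp [bumpRow, h.not_ge]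

lemma bumpRow_of_forall_le (h : ∀ z ∈ r, z ≤ x) : bumpRow r x = (r ++ [x], none) := by
  induction r with
  | nil => rfl
  | cons e t ih =>
    rw [bumpRow_cons_of_le t (h e List.mem_cons_self), ih fun z hz => h z (.tail _ hz)]
    rfl

lemma forall_le_of_bumpRow_snd_eq_none (h : (bumpRow r x).2 = none) : ∀ z ∈ r, z ≤ x := by
  induction r with
  | nil => simp
  | cons e t ih =>
    rcases le_or_gt e x with hex | hxe
    · rw [bumpRow_cons_of_le t hex] at h
      exact List.forall_mem_cons.2 ⟨hex, ih h⟩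
    · simp [bumpRow_cons_of_lt t hxe] at h

lemma bumpRow_fst_of_snd_eq_none (h : (bumpRow r x).2 = none) :
    (bumpRow r x).1 = r ++ [x] := by
  rw [bumpRow_of_forall_le (forall_le_of_bumpRow_snd_eq_none h)]

lemma bumpRow_split_of_snd_eq_some (h : (bumpRow r x).2 = some y) :
    ∃ p s, r = p ++ y :: s ∧ (bumpRow r x).1 = p ++ x :: s ∧
      (∀ z ∈ p, z ≤ x) ∧ x < y := by
  induction r with
  | nil => simp at h
  | cons e t ih =>
    rcases le_or_gt e x with hex | hxe
    · rw [bumpRow_cons_of_le t hex] at h ⊢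
      obtain ⟨p, s, rfl, hrow, hp, hxy⟩ := ih h
      exact ⟨e :: p, s, rfl, by rw [hrow]; rfl, List.forall_mem_cons.2 ⟨hex, hp⟩, hxy⟩
    · rw [bumpRow_cons_of_lt t hxe] at h ⊢
      cases h
      exact ⟨[], t, rfl, rfl, by simp, hxe⟩

lemma lt_of_bumpRow_snd_eq_some (h : (bumpRow r x).2 = some y) : x < y := by
  obtain ⟨-, -, -, -, -, hxy⟩ := bumpRow_split_of_snd_eq_some h
  exact hxy

lemma mem_of_bumpRow_snd_eq_some (h : (bumpRow r x).2 = some y) : y ∈ r := by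
  obtain ⟨p, s, rfl, -⟩ := bumpRow_split_of_snd_eq_some h
  simp

lemma le_of_bumpRow_snd_eq_some (hr : r.Pairwise (· ≤ ·)) (h : (bumpRow r x).2 = some y)
    {z : α} (hz : z ∈ r) (hxz : x < z) : y ≤ z := by
  obtain ⟨p, s, rfl, -, hp, -⟩ := bumpRow_split_of_snd_eq_some h
  rcases List.mem_append.1 hz with hzp | hzs
  · exact absurd (hp z hzp) hxz.not_ge
  · rcases List.mem_cons.1 hzs with rfl | hzs
    · rfl
    · exact (List.pairwise_cons.1 (List.pairwise_append.1 hr).2.1).1 z hzs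

lemma exists_bumpRow_snd_eq_some {z : α} (hz : z ∈ r) (hxz : x < z) :
    ∃ y, (bumpRow r x).2 = some y :=
  Option.ne_none_iff_exists'.1 fun h => (forall_le_of_bumpRow_snd_eq_none h z hz).not_gt hxz

lemma mem_bumpRow_fst_self (r : List α) (x : α) : x ∈ (bumpRow r x).1 := by
  rcases h : (bumpRow r x).2 with _ | y
  · simp [bumpRow_fst_of_snd_eq_none h]
  · obtain ⟨p, s, -, hrow, -⟩ := bumpRow_split_of_snd_eq_some h
    simp [hrow]

lemma mem_or_eq_of_mem_bumpRow_fst {z : α} (hz : z ∈ (bumpRow r x).1) : z ∈ r ∨ z = x := by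
  rcases h : (bumpRow r x).2 with _ | y
  · simpa [bumpRow_fst_of_snd_eq_none h] using hz
  · obtain ⟨p, s, rfl, hrow, -⟩ := bumpRow_split_of_snd_eq_some h
    rw [hrow] at hz
    simp only [List.mem_append, List.mem_cons] at hz ⊢
    tauto

lemma pairwise_bumpRow_fst (hr : r.Pairwise (· ≤ ·)) :
    (bumpRow r x).1.Pairwise (· ≤ ·) := by
  induction r with
  | nil => simp
  | cons e t ih =>
    rw [List.pairwise_cons] at hr
    rcases le_or_gt e x with hex | hxe
    · rw [bumpRow_cons_of_le t hex, List.pairwise_cons]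
      refine ⟨fun z hz => ?_, ih hr.2⟩
      rcases mem_or_eq_of_mem_bumpRow_fst hz with hz | rfl
      exacts [hr.1 z hz, hex]
    · rw [bumpRow_cons_of_lt t hxe, List.pairwise_cons]
      exact ⟨fun z hz => hxe.le.trans (hr.1 z hz), hr.2⟩

end Bumping

section Insertion

variable {α : Type*} [LinearOrder α]

def RowsSorted (T : List (List α)) : Prop := ∀ r ∈ T, r.Pairwise (· ≤ ·)

lemma insertTab_cons (r : List α) (rest : List (List α)) (x : α) :
    insertTab (r :: rest) x =
      (bumpRow r x).1 :: ((bumpRow r x).2.elim rest (insertTab rest)) := by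
  rcases h : bumpRow r x with ⟨r', _ | y⟩ <;> simp [insertTab, h]

lemma RowsSorted.insertTab {T : List (List α)} (hT : RowsSorted T) (x : α) :
    RowsSorted (insertTab T x) := by
  induction T generalizing x with
  | nil => simp [RowsSorted, _root_.insertTab]
  | cons r rest ih =>
    rw [RowsSorted, List.forall_mem_cons] at hT
    rw [insertTab_cons, RowsSorted, List.forall_mem_cons]
    refine ⟨pairwise_bumpRow_fst hT.1, ?_⟩
    rcases (bumpRow r x).2 with _ | y
    exacts [hT.2, ih hT.2 y]

lemma rowsSorted_foldl_insertTab {T : List (List α)} (hT : RowsSorted T) (w : List α) :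
    RowsSorted (w.foldl insertTab T) := by
  induction w generalizing T with
  | nil => exact hT
  | cons x w ih => exact ih (hT.insertTab x)

lemma rowsSorted_RSKP (w : List α) : RowsSorted (RSKP w) :=
  rowsSorted_foldl_insertTab (by simp [RowsSorted]) w

def bumpRowWord (r : List α) : List α → List α × List α
  | [] => (r, [])
  | x :: xs =>
    ((bumpRowWord (bumpRow r x).1 xs).1,
      (bumpRow r x).2.toList ++ (bumpRowWord (bumpRow r x).1 xs).2)

lemma foldl_insertTab_cons (w : List α) (r : List α) (rest : List (List α)) :
    w.foldl insertTab (r :: rest) =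
      (bumpRowWord r w).1 :: (bumpRowWord r w).2.foldl insertTab rest := by
  induction w generalizing r rest with
  | nil => rfl
  | cons x w ih =>
    rw [List.foldl_cons, insertTab_cons, ih]
    rcases h : (bumpRow r x).2 with _ | y <;> simp [bumpRowWord, h]

lemma bumpRowWord_cons_of_forall_le {e : α} {w : List α} (hw : ∀ x ∈ w, e ≤ x)
    (t : List α) :
    bumpRowWord (e :: t) w = (e :: (bumpRowWord t w).1, (bumpRowWord t w).2) := by
  induction w generalizing t with
  | nil => rfl
  | cons x w ih =>
    rw [List.forall_mem_cons] at hw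
    simp only [bumpRowWord, bumpRow_cons_of_le t hw.1, ih hw.2]

end Insertion

section RowWord

variable {α : Type*}

def rowWord (T : List (List α)) : List α := T.reverse.flatten

lemma rowWord_cons (r : List α) (T : List (List α)) : rowWord (r :: T) = rowWord T ++ r := by
  simp [rowWord]

end RowWord

section Plactic

variable {α : Type*} [LinearOrder α]

inductive KnuthTriple : List α → List α → Prop
  | acb {a b c : α} (hab : a ≤ b) (hbc : b < c) : KnuthTriple [a, c, b] [c, a, b]
  | bac {a b c : α} (hab : a < b) (hbc : b ≤ c) : KnuthTriple [b, a, c] [b, c, a]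

variable (α) in
def placticCon : Con (FreeMonoid α) := conGen fun x y => KnuthTriple x.toList y.toList

open FreeMonoid

lemma placticCon_of_knuthTriple {t t' : List α} (h : KnuthTriple t t') :
    placticCon α (ofList t) (ofList t') :=
  ConGen.Rel.of _ _ h

lemma placticCon_append {w w' v v' : List α} (h : placticCon α (ofList w) (ofList w'))
    (h' : placticCon α (ofList v) (ofList v')) :
    placticCon α (ofList (w ++ v)) (ofList (w' ++ v')) :=
  (placticCon α).mul h h'

lemma placticCon_append_left (u : List α) {w w' : List α}
    (h : placticCon α (ofList w) (ofList w')) :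
    placticCon α (ofList (u ++ w)) (ofList (u ++ w')) :=
  placticCon_append ((placticCon α).refl _) h

lemma placticCon_append_right {w w' : List α} (h : placticCon α (ofList w) (ofList w'))
    (v : List α) : placticCon α (ofList (w ++ v)) (ofList (w' ++ v)) :=
  placticCon_append h ((placticCon α).refl _)

lemma placticCon_cons_append_singleton {x y : α} (hxy : x < y) {p : List α}
    (hp : ∀ z ∈ p, z ≤ x) (hps : p.Pairwise (· ≤ ·)) :
    placticCon α (ofList (y :: p ++ [x])) (ofList (p ++ [y, x])) := by
  induction p with
  | nil => exact (placticCon α).refl _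
  | cons a q ih =>
    rw [List.forall_mem_cons] at hp
    rw [List.pairwise_cons] at hps
    have hbounds : ∀ z ∈ q ++ [x], a ≤ z ∧ z ≤ x := by
      rw [List.forall_mem_append, List.forall_mem_singleton]
      exact ⟨fun z hz => ⟨hps.1 z hz, hp.2 z hz⟩, hp.1, le_rfl⟩
    obtain ⟨z, rest, hzr⟩ := List.exists_cons_of_ne_nil (l := q ++ [x]) (by simp)
    obtain ⟨haz, hzx⟩ := hbounds z (hzr ▸ List.mem_cons_self)
    have swap : placticCon α (ofList (y :: a :: (q ++ [x]))) (ofList (a :: y :: (q ++ [x]))) := by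
      rw [hzr]
      exact ((placticCon α).symm
        (placticCon_of_knuthTriple (.acb haz (hzx.trans_lt hxy)))).mul ((placticCon α).refl _)
    exact ((placticCon α).trans swap (placticCon_append_left [a] (ih hp.2 hps.2)))

lemma placticCon_cons_cons {x y : α} (hxy : x < y) {s : List α} (hs : ∀ z ∈ s, y ≤ z)
    (hss : s.Pairwise (· ≤ ·)) :
    placticCon α (ofList (y :: x :: s)) (ofList (y :: s ++ [x])) := by
  induction s generalizing y with
  | nil => exact (placticCon α).refl _
  | cons c t ih =>
    rw [List.forall_mem_cons] at hs
    rw [List.pairwise_cons] at hss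
    have swap : placticCon α (ofList (y :: x :: c :: t)) (ofList (y :: c :: x :: t)) :=
      (placticCon_of_knuthTriple (.bac hxy hs.1)).mul ((placticCon α).refl (ofList t))
    exact (placticCon α).trans swap
      (placticCon_append_left [y] (ih (hxy.trans_le hs.1) hss.1 hss.2))

lemma placticCon_bump {x y : α} {p s : List α} (hp : ∀ z ∈ p, z ≤ x) (hxy : x < y)
    (hr : (p ++ y :: s).Pairwise (· ≤ ·)) :
    placticCon α (ofList (y :: p ++ x :: s)) (ofList (p ++ y :: s ++ [x])) := by
  obtain ⟨hps, hys, -⟩ := List.pairwise_append.1 hr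
  obtain ⟨hs, hss⟩ := List.pairwise_cons.1 hys
  have h₁ := placticCon_append_right (placticCon_cons_append_singleton hxy hp hps) s
  have h₂ := placticCon_append_left p (placticCon_cons_cons hxy hs hss)
  simp only [List.cons_append, List.append_assoc] at h₁ h₂ ⊢
  exact (placticCon α).trans h₁ h₂

lemma placticCon_rowWord_insertTab (x : α) {T : List (List α)} (hT : RowsSorted T) :
    placticCon α (ofList (rowWord (insertTab T x))) (ofList (rowWord T ++ [x])) := by
  induction T generalizing x with
  | nil => exact (placticCon α).refl _
  | cons r rest ih =>
    rw [RowsSorted, List.forall_mem_cons] at hT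
    rw [insertTab_cons]
    rcases h : (bumpRow r x).2 with _ | y
    · rw [Option.elim, rowWord_cons, rowWord_cons, bumpRow_fst_of_snd_eq_none h,
        ← List.append_assoc]
      exact (placticCon α).refl _
    · obtain ⟨p, s, rfl, hrow, hp, hxy⟩ := bumpRow_split_of_snd_eq_some h
      rw [Option.elim, rowWord_cons, rowWord_cons, hrow]
      refine (placticCon α).trans (placticCon_append_right (ih y hT.2) _) ?_
      simpa only [List.append_assoc, List.cons_append, List.singleton_append, List.nil_append] using
        placticCon_append_left (rowWord rest) (placticCon_bump hp hxy hT.1)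

lemma placticCon_rowWord_RSKP (w : List α) :
    placticCon α (ofList w) (ofList (rowWord (RSKP w))) := by
  induction w using List.reverseRecOn with
  | nil => exact (placticCon α).refl _
  | append_singleton w x ih =>
    rw [RSKP, List.foldl_append]
    exact (placticCon α).trans (placticCon_append_right ih [x])
      ((placticCon α).symm (placticCon_rowWord_insertTab x (rowsSorted_RSKP w)))

end Plactic

section KnuthLemma

variable {α : Type*} [LinearOrder α]

open Relation

lemma bumpRowWord_acb {a b c : α} (hab : a ≤ b) (hbc : b < c) {r : List α}
    (hr : r.Pairwise (· ≤ ·)) :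
    (bumpRowWord r [a, c, b]).1 = (bumpRowWord r [c, a, b]).1 ∧
      ReflGen (SymmGen KnuthTriple) (bumpRowWord r [a, c, b]).2 (bumpRowWord r [c, a, b]).2 := by
  have hac : a ≤ c := hab.trans hbc.le
  induction r with
  | nil =>
    simp [bumpRowWord, bumpRow_cons_of_le _ hac, bumpRow_cons_of_lt _ hbc,
      bumpRow_cons_of_lt _ (hab.trans_lt hbc), bumpRow_cons_of_le _ hab, ReflGen.refl]
  | cons e r ih =>
    obtain ⟨her, hr⟩ := List.pairwise_cons.1 hr
    rcases le_or_gt e a with hea | hae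
    · rw [bumpRowWord_cons_of_forall_le (by simp [hea, hea.trans hab, hea.trans hac]),
        bumpRowWord_cons_of_forall_le (by simp [hea, hea.trans hab, hea.trans hac])]
      exact ⟨congrArg (e :: ·) (ih hr).1, (ih hr).2⟩
    rcases le_or_gt e c with hec | hce
    · simp only [bumpRowWord, bumpRow_cons_of_lt _ hae, bumpRow_cons_of_le _ hac,
        bumpRow_cons_of_le _ hab, bumpRow_cons_of_le _ hec]
      refine ⟨trivial, ?_⟩
      rcases hg : (bumpRow r c).2 with _ | g
      · simp [ReflGen.refl]
      obtain ⟨h, hh⟩ := exists_bumpRow_snd_eq_some (mem_bumpRow_fst_self r c) hbc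
      have hhc : h ≤ c :=
        le_of_bumpRow_snd_eq_some (pairwise_bumpRow_fst hr) hh (mem_bumpRow_fst_self r c) hbc
      have heh : e ≤ h :=
        (mem_or_eq_of_mem_bumpRow_fst (mem_of_bumpRow_snd_eq_some hh)).elim (her h) (· ▸ hec)
      rw [hh]
      -- the bumped words are `e g h` and `g e h`
      exact .single (.inl (.acb heh (hhc.trans_lt (lt_of_bumpRow_snd_eq_some hg))))
    · rcases r with _ | ⟨f, r⟩
      · simp [bumpRowWord, bumpRow_cons_of_lt _ hae, bumpRow_cons_of_le _ hac,
          bumpRow_cons_of_lt _ hce, bumpRow_cons_of_lt _ (hab.trans_lt hbc),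
          bumpRow_cons_of_le _ hab, bumpRow_cons_of_lt _ hbc, ReflGen.refl]
      · have hef := her f List.mem_cons_self
        simp only [bumpRowWord, bumpRow_cons_of_lt _ hae, bumpRow_cons_of_le _ hac,
          bumpRow_cons_of_lt _ (hce.trans_le hef), bumpRow_cons_of_lt _ hbc,
          bumpRow_cons_of_lt _ hce, bumpRow_cons_of_lt _ (hab.trans_lt hbc),
          bumpRow_cons_of_le _ hab, bumpRow_cons_of_lt _ (hbc.trans (hce.trans_le hef))]
        -- the bumped words are `e f c` and `e c f`
        exact ⟨trivial, .single (.inr (.bac hce hef))⟩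

lemma bumpRowWord_bac {a b c : α} (hab : a < b) (hbc : b ≤ c) {r : List α}
    (hr : r.Pairwise (· ≤ ·)) :
    (bumpRowWord r [b, a, c]).1 = (bumpRowWord r [b, c, a]).1 ∧
      ReflGen (SymmGen KnuthTriple) (bumpRowWord r [b, a, c]).2 (bumpRowWord r [b, c, a]).2 := by
  have hac : a ≤ c := hab.le.trans hbc
  induction r with
  | nil =>
    simp [bumpRowWord, bumpRow_cons_of_le _ hbc, bumpRow_cons_of_le _ hac, bumpRow_cons_of_lt _ hab,
      ReflGen.refl]
  | cons e r ih =>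
    obtain ⟨her, hr⟩ := List.pairwise_cons.1 hr
    rcases le_or_gt e a with hea | hae
    · rw [bumpRowWord_cons_of_forall_le (by simp [hea, hea.trans hab.le, hea.trans hac]),
        bumpRowWord_cons_of_forall_le (by simp [hea, hea.trans hab.le, hea.trans hac])]
      exact ⟨congrArg (e :: ·) (ih hr).1, (ih hr).2⟩
    rcases le_or_gt e b with heb | hbe
    · simp only [bumpRowWord, bumpRow_cons_of_le _ heb, bumpRow_cons_of_lt _ hae,
        bumpRow_cons_of_le _ hac, bumpRow_cons_of_le _ (heb.trans hbc)]
      refine ⟨trivial, ?_⟩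
      rcases hg : (bumpRow (bumpRow r b).1 c).2 with _ | g
      · simp [ReflGen.refl]
      have hcg := lt_of_bumpRow_snd_eq_some hg
      have hgr : g ∈ r :=
        (mem_or_eq_of_mem_bumpRow_fst (mem_of_bumpRow_snd_eq_some hg)).resolve_right
          fun hgb => (hgb ▸ hbc).not_gt hcg
      obtain ⟨f, hf⟩ := exists_bumpRow_snd_eq_some hgr (hbc.trans_lt hcg)
      have hfg : f ≤ g := le_of_bumpRow_snd_eq_some hr hf hgr (hbc.trans_lt hcg)
      rw [hf]
      -- the bumped words are `f e g` and `f g e`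
      exact .single (.inl (.bac (heb.trans_lt (lt_of_bumpRow_snd_eq_some hf)) hfg))
    · simp only [bumpRowWord, bumpRow_cons_of_lt _ hbe, bumpRow_cons_of_lt _ hab,
        bumpRow_cons_of_le _ hac, bumpRow_cons_of_le _ hbc]
      refine ⟨trivial, ?_⟩
      rcases hg : (bumpRow r c).2 with _ | g
      · simp [ReflGen.refl]
      -- the bumped words are `e b g` and `e g b`
      exact .single (.inl (.bac hbe (her g (mem_of_bumpRow_snd_eq_some hg))))

lemma bumpRowWord_of_knuthTriple {t t' : List α} (h : KnuthTriple t t') {r : List α}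
    (hr : r.Pairwise (· ≤ ·)) :
    (bumpRowWord r t).1 = (bumpRowWord r t').1 ∧
      ReflGen (SymmGen KnuthTriple) (bumpRowWord r t).2 (bumpRowWord r t').2 := by
  cases h with
  | acb hab hbc => exact bumpRowWord_acb hab hbc hr
  | bac hab hbc => exact bumpRowWord_bac hab hbc hr

lemma foldl_insertTab_eq_of_knuthTriple {t t' : List α} (h : KnuthTriple t t')
    {T : List (List α)} (hT : RowsSorted T) : t.foldl insertTab T = t'.foldl insertTab T := by
  induction T generalizing t t' with
  | nil =>
    cases h with
    | acb hab hbc =>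
      simp [insertTab, bumpRow_cons_of_le _ (hab.trans hbc.le), bumpRow_cons_of_lt _ hbc,
        bumpRow_cons_of_lt _ (hab.trans_lt hbc), bumpRow_cons_of_le _ hab]
    | bac hab hbc =>
      simp [insertTab, bumpRow_cons_of_le _ hbc, bumpRow_cons_of_le _ (hab.le.trans hbc),
        bumpRow_cons_of_lt _ hab]
  | cons r rest ih =>
    rw [RowsSorted, List.forall_mem_cons] at hT
    obtain ⟨hrow, hout⟩ := bumpRowWord_of_knuthTriple h hT.1
    rw [foldl_insertTab_cons, foldl_insertTab_cons, hrow]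
    rcases (reflGen_iff _ _ _).1 hout with h' | h' | h'
    · rw [h']
    · rw [ih h' hT.2]
    · rw [ih h' hT.2]

variable (α) in
def insertionCon : Con (FreeMonoid α) where
  r x y := ∀ T, RowsSorted T → x.toList.foldl insertTab T = y.toList.foldl insertTab T
  iseqv :=
    ⟨fun _ _ _ => rfl, fun h T hT => (h T hT).symm, fun h h' T hT => (h T hT).trans (h' T hT)⟩
  mul' {x x' y y'} h h' T hT := by
    simp only [FreeMonoid.toList_mul, List.foldl_append, h T hT]
    exact h' _ (rowsSorted_foldl_insertTab hT _)

lemma placticCon_le_insertionCon : placticCon α ≤ insertionCon α :=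
  Con.conGen_le.2 fun _ _ h _ hT => foldl_insertTab_eq_of_knuthTriple h hT

theorem placticCon_ofList_iff_RSKP_eq {w w' : List α} :
    placticCon α (.ofList w) (.ofList w') ↔ RSKP w = RSKP w' := by
  refine ⟨fun h => placticCon_le_insertionCon h [] (by simp [RowsSorted]), fun h => ?_⟩
  have hw := placticCon_rowWord_RSKP w
  rw [h] at hw
  exact (placticCon α).trans hw ((placticCon α).symm (placticCon_rowWord_RSKP w'))

end KnuthLemma

section PlacticAlgebra

variable (R : Type*) [CommSemiring R] (α : Type*) [LinearOrder α]

noncomputable def placticAlgHom :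
    FreeAlgebra R α →ₐ[R] MonoidAlgebra R (placticCon α).Quotient :=
  FreeAlgebra.lift R fun i => MonoidAlgebra.of R _ ((placticCon α).mk' (.of i))

variable {α} in
lemma placticAlgHom_lift_ι (x : FreeMonoid α) :
    placticAlgHom R α (FreeMonoid.lift (FreeAlgebra.ι R) x) =
      MonoidAlgebra.of R _ (x : (placticCon α).Quotient) := by
  have : (placticAlgHom R α).toMonoidHom.comp (FreeMonoid.lift (FreeAlgebra.ι R)) =
      (MonoidAlgebra.of R _).comp (placticCon α).mk' :=
    FreeMonoid.hom_eq fun i => by simp [placticAlgHom]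
  exact DFunLike.congr_fun this x

end PlacticAlgebra

section PlacticIdeal

variable {N : ℕ}

lemma uList_eq_lift (w : List (Fin N)) :
    uList w = FreeMonoid.lift (FreeAlgebra.ι ℚ) (.ofList w) := by
  simp [uList, FreeMonoid.lift_apply]

lemma Iplac_eq_span (N : ℕ) :
    Iplac N = TwoSidedIdeal.span {z | ∃ t t', KnuthTriple t t' ∧ z = uList t - uList t'} := by
  rw [Iplac]
  congr 1
  ext z
  rw [Set.mem_union]
  constructor
  · rintro (⟨a, b, c, hab, hbc, rfl⟩ | ⟨a, b, c, hab, hbc, rfl⟩)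
    · exact ⟨_, _, .acb hab hbc, by simp [uList, mul_assoc]⟩
    · exact ⟨_, _, .bac hab hbc, by simp [uList, mul_assoc]⟩
  · rintro ⟨t, t', (⟨hab, hbc⟩ | ⟨hab, hbc⟩), rfl⟩
    · exact .inl ⟨_, _, _, hab, hbc, by simp [uList, mul_assoc]⟩
    · exact .inr ⟨_, _, _, hab, hbc, by simp [uList, mul_assoc]⟩

lemma Iplac_le_ker_placticAlgHom (N : ℕ) :
    Iplac N ≤ TwoSidedIdeal.ker (placticAlgHom ℚ (Fin N)) := by
  rw [Iplac_eq_span, TwoSidedIdeal.span_le]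
  rintro _ ⟨t, t', ht, rfl⟩
  rw [SetLike.mem_coe, TwoSidedIdeal.mem_ker, map_sub, uList_eq_lift, uList_eq_lift,
    placticAlgHom_lift_ι, placticAlgHom_lift_ι, (Con.eq _).2 (placticCon_of_knuthTriple ht),
    sub_self]

lemma placticCon_le_comap_Iplac (N : ℕ) :
    placticCon (Fin N) ≤
      (Iplac N).ringCon.toCon.comap (FreeMonoid.lift (FreeAlgebra.ι ℚ)) (map_mul _) :=
  Con.conGen_le.2 fun x y ht => by
    rw [Con.comap_rel, RingCon.toCon_coe_eq_coe, TwoSidedIdeal.rel_iff, Iplac_eq_span]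
    exact TwoSidedIdeal.subset_span ⟨_, _, ht, by rw [uList_eq_lift, uList_eq_lift]; rfl⟩

theorem sub_mem_Iplac_iff_placticCon {w w' : List (Fin N)} :
    uList w - uList w' ∈ Iplac N ↔ placticCon (Fin N) (.ofList w) (.ofList w') := by
  rw [uList_eq_lift, uList_eq_lift]
  constructor
  · intro h
    have h' := Iplac_le_ker_placticAlgHom N h
    rw [TwoSidedIdeal.mem_ker, map_sub, sub_eq_zero, placticAlgHom_lift_ι,
      placticAlgHom_lift_ι] at h'
    exact (Con.eq _).1 (MonoidAlgebra.of_injective h')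
  · intro h
    simpa only [Con.comap_rel, RingCon.toCon_coe_eq_coe, TwoSidedIdeal.rel_iff] using
      placticCon_le_comap_Iplac N h

end PlacticIdeal

/-- `u_w ≡ u_{w'} mod I_plac` if and only if `P(w) = P(w')`. -/
theorem stmt14 (N : ℕ) (w w' : List (Fin N)) :
    uList w - uList w' ∈ Iplac N ↔ RSKP w = RSKP w' :=
  sub_mem_Iplac_iff_placticCon.trans placticCon_ofList_iff_RSKP_eq
end
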